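/- For every general preference formula Ψ, the relation ≺_Ψ on trajectories is a strict partial order: it is irreflexive (α ≺_Ψ α never holds) and transitive (if α ≺_Ψ β and β ≺_Ψ γ then α ≺_Ψ γ). -/

import Mathlib

/- # Action language B -/

/-- A fluent literal: a fluent or its negation. -/
inductive Lit (F : Type) where
  | pos : F → Lit F
  | neg : F → Lit F

namespace Lit
/-- The complement of a fluent literal. -/
def compl {F : Type} : Lit F → Lit F
  | .pos f => .neg f
  | .neg f => .pos f
end Lit

/-- A set of fluent literals is consistent if it contains no fluent together with
its negation. -/
def ConsistentLits {F : Type} (s : Set (Lit F)) : Prop :=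
  ∀ f : F, ¬ (Lit.pos f ∈ s ∧ Lit.neg f ∈ s)

/-- A set of fluent literals is complete if it contains each fluent or its negation. -/
def CompleteLits {F : Type} (s : Set (Lit F)) : Prop :=
  ∀ f : F, Lit.pos f ∈ s ∨ Lit.neg f ∈ s

/-- A static causal law `caused(prem, concl)`. -/
structure StaticLaw (F : Type) where
  prem : Set (Lit F)
  concl : Lit F

/-- A dynamic causal law `causes(act, concl, prem)`. -/
structure DynamicLaw (F A : Type) where
  act : A
  concl : Lit F
  prem : Set (Lit F)

/-- An executability condition `executable(act, prem)`. -/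
structure ExecLaw (F A : Type) where
  act : A
  prem : Set (Lit F)

/-- A domain in the action language B. -/
structure BDomain (F A : Type) where
  statics : Set (StaticLaw F)
  dynamics : Set (DynamicLaw F A)
  execs : Set (ExecLaw F A)

/-- `v` is closed under the set `K` of static causal laws. -/
def ClosedUnder {F : Type} (K : Set (StaticLaw F)) (v : Set (Lit F)) : Prop :=
  ∀ r ∈ K, r.prem ⊆ v → r.concl ∈ v

/-- `IsCl K u v`: `v` is the least consistent set of literals containing `u`
and closed under `K`. -/
def IsCl {F : Type} (K : Set (StaticLaw F)) (u v : Set (Lit F)) : Prop :=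
  u ⊆ v ∧ ConsistentLits v ∧ ClosedUnder K v ∧
    ∀ w, u ⊆ w → ConsistentLits w → ClosedUnder K w → v ⊆ w

/-- A state: a maximal (complete) consistent set of fluent literals closed under
the static causal laws. -/
def IsState {F A : Type} (D : BDomain F A) (s : Set (Lit F)) : Prop :=
  CompleteLits s ∧ ConsistentLits s ∧ ClosedUnder D.statics s

/-- Action `a` is executable in `s`. -/
def Executable {F A : Type} (D : BDomain F A) (a : A) (s : Set (Lit F)) : Prop :=
  ∃ e ∈ D.execs, e.act = a ∧ e.prem ⊆ s

/-- The direct effects `e(a,s)` of action `a` in `s`. -/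
def directEffects {F A : Type} (D : BDomain F A) (a : A) (s : Set (Lit F)) : Set (Lit F) :=
  { l | ∃ d ∈ D.dynamics, d.act = a ∧ d.concl = l ∧ d.prem ⊆ s }

/-- The transition function `Φ` of a domain. -/
def Phi {F A : Type} (D : BDomain F A) (a : A) (s : Set (Lit F)) : Set (Set (Lit F)) :=
  { s' | Executable D a s ∧ IsState D s' ∧
      IsCl D.statics (directEffects D a s ∪ (s ∩ s')) s' }

/-- A planning problem `⟨D, Γ, Δ⟩`; `init` is the set of literals `f` with
`initially(f) ∈ Γ`, and `goal` is `Δ`. -/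
structure PlanningProblem (F A : Type) where
  dom : BDomain F A
  init : Set (Lit F)
  goal : Set (Lit F)

/-- The action theory `(D,Γ)` is consistent: `Φ(a,s) ≠ ∅` whenever `a` is executable
in state `s`, and the initial state is a state. -/
def ConsistentTheory {F A : Type} (P : PlanningProblem F A) : Prop :=
  (∀ (a : A) (s : Set (Lit F)), IsState P.dom s → Executable P.dom a s →
      (Phi P.dom a s).Nonempty) ∧
  IsState P.dom P.init

/-- `s0 a0 s1 ... a_{n-1} s_n` is a trajectory. -/
def IsTrajectory {F A : Type} (D : BDomain F A) (n : ℕ)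
    (ss : ℕ → Set (Lit F)) (acts : ℕ → A) : Prop :=
  IsState D (ss 0) ∧ ∀ i < n, ss (i + 1) ∈ Phi D (acts i) (ss i)


/- # Trajectories and the preference language -/

/-- A (candidate) trajectory `s0 a0 s1 ... a_{len-1} s_len`, given by its length and
the sequences of states and actions. -/
structure PTraj (F A : Type) where
  len : ℕ
  states : ℕ → Set (Lit F)
  acts : ℕ → A

/-- `α` is a trajectory of the domain `D`. -/
def PTraj.ValidFor {F A : Type} (D : BDomain F A) (α : PTraj F A) : Prop :=
  IsTrajectory D α.len α.states α.acts

/-- The suffix `α[i] = s_i a_i ... a_{len-1} s_len`. -/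
def PTraj.suffix {F A : Type} (α : PTraj F A) (i : ℕ) : PTraj F A :=
  ⟨α.len - i, fun j => α.states (i + j), fun j => α.acts (i + j)⟩

/-- Fluent formulas: propositional formulas over fluent literals. -/
inductive FFormula (F : Type) where
  | lit : Lit F → FFormula F
  | conj : FFormula F → FFormula F → FFormula F
  | disj : FFormula F → FFormula F → FFormula F
  | fneg : FFormula F → FFormula F

/-- Satisfaction of a fluent formula in a set of fluent literals. -/
def FSat {F : Type} (s : Set (Lit F)) : FFormula F → Prop
  | .lit l => l ∈ s
  | .conj a b => FSat s a ∧ FSat s b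
  | .disj a b => FSat s a ∨ FSat s b
  | .fneg a => ¬ FSat s a

/-- Basic desire formulas: built from fluent literals, occurrence atoms `occ(a)`, and
goal preferences `goal(φ)` using `∧`, `∨`, `¬` and the temporal modalities
`next`, `until`, `always`, `eventually`. -/
inductive BDF (F A : Type) where
  | flit : Lit F → BDF F A
  | occA : A → BDF F A
  | goal : FFormula F → BDF F A
  | conj : BDF F A → BDF F A → BDF F A
  | disj : BDF F A → BDF F A → BDF F A
  | bneg : BDF F A → BDF F A
  | next : BDF F A → BDF F A
  | untl : BDF F A → BDF F A → BDF F A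
  | always : BDF F A → BDF F A
  | eventually : BDF F A → BDF F A

/-- Satisfaction `α ⊨ ψ` of a basic desire formula by a trajectory. -/
def Sat {F A : Type} : BDF F A → PTraj F A → Prop
  | .flit l, α => l ∈ α.states 0
  | .occA a, α => 0 < α.len ∧ α.acts 0 = a
  | .goal φ, α => FSat (α.states α.len) φ
  | .conj ψ1 ψ2, α => Sat ψ1 α ∧ Sat ψ2 α
  | .disj ψ1 ψ2, α => Sat ψ1 α ∨ Sat ψ2 α
  | .bneg ψ, α => ¬ Sat ψ α
  | .next ψ, α => 0 < α.len ∧ Sat ψ (α.suffix 1)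
  | .untl ψ1 ψ2, α => ∃ i ≤ α.len, (∀ j < i, Sat ψ1 (α.suffix j)) ∧ Sat ψ2 (α.suffix i)
  | .always ψ, α => ∀ i < α.len, Sat ψ (α.suffix i)
  | .eventually ψ, α => ∃ i ≤ α.len, Sat ψ (α.suffix i)

/-- `α ≺_φ β` for a basic desire formula `φ`. -/
def bdPref {F A : Type} (φ : BDF F A) (α β : PTraj F A) : Prop :=
  Sat φ α ∧ ¬ Sat φ β

/-- `α ≈_φ β` for a basic desire formula `φ`. -/
def bdEquiv {F A : Type} (φ : BDF F A) (α β : PTraj F A) : Prop :=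
  Sat φ α ↔ Sat φ β

/-- `α ≺ β` for an atomic preference `φ_0 ◁ φ_1 ◁ ... ◁ φ_{k-1}` given as a list. -/
def atomicPref {F A : Type} (φs : List (BDF F A)) (α β : PTraj F A) : Prop :=
  ∃ i, ∃ h : i < φs.length,
    (∀ j, ∀ hj : j < φs.length, j < i → bdEquiv (φs.get ⟨j, hj⟩) α β) ∧
    bdPref (φs.get ⟨i, h⟩) α β

/-- General preference formulas: atomic preferences (lists of basic desire formulas),
`Ψ1 & Ψ2`, `Ψ1 | Ψ2`, `!Ψ`, and chains `Ψ1 ◁ Ψ2 ◁ ... ◁ Ψk` (represented by the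
right-nested binary constructor `chain`, so that `Ψ1 ◁ ... ◁ Ψk` is
`chain Ψ1 (chain Ψ2 (... Ψk))`). -/
inductive GPF (F A : Type) where
  | atomic : List (BDF F A) → GPF F A
  | band : GPF F A → GPF F A → GPF F A
  | bor : GPF F A → GPF F A → GPF F A
  | bneg : GPF F A → GPF F A
  | chain : GPF F A → GPF F A → GPF F A

mutual
/-- The preference relation `α ≺_Ψ β` for a general preference formula. -/
def Pref {F A : Type} : GPF F A → PTraj F A → PTraj F A → Prop
  | .atomic φs, α, β => atomicPref φs α β
  | .band Ψ1 Ψ2, α, β => Pref Ψ1 α β ∧ Pref Ψ2 α β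
  | .bor Ψ1 Ψ2, α, β =>
      (Pref Ψ1 α β ∧ TrajEquiv Ψ2 α β) ∨ (Pref Ψ2 α β ∧ TrajEquiv Ψ1 α β) ∨
      (Pref Ψ1 α β ∧ Pref Ψ2 α β)
  | .bneg Ψ, α, β => Pref Ψ β α
  | .chain Ψ1 Ψ2, α, β => Pref Ψ1 α β ∨ (TrajEquiv Ψ1 α β ∧ Pref Ψ2 α β)

/-- The indistinguishability relation `α ≈_Ψ β` for a general preference formula. -/
def TrajEquiv {F A : Type} : GPF F A → PTraj F A → PTraj F A → Prop
  | .atomic φs, α, β => ∀ φ ∈ φs, bdEquiv φ α β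
  | .band Ψ1 Ψ2, α, β => TrajEquiv Ψ1 α β ∧ TrajEquiv Ψ2 α β
  | .bor Ψ1 Ψ2, α, β => TrajEquiv Ψ1 α β ∧ TrajEquiv Ψ2 α β
  | .bneg Ψ, α, β => TrajEquiv Ψ α β
  | .chain Ψ1 Ψ2, α, β => TrajEquiv Ψ1 α β ∧ TrajEquiv Ψ2 α β
end

/-! `α ≈_Ψ β` says that `α` and `β` satisfy the same basic desires occurring in `Ψ`, so it is an
equivalence relation, and `≺_Ψ` is invariant under it. Irreflexivity and transitivity then go by
induction on `Ψ`: atomic preferences and chains are lexicographic, `&` is an intersection, `!` a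
converse, and `Ψ1 | Ψ2` is the Pareto order of its components, whose transitivity reduces to that
of the weak orders `≺_{Ψi} ∪ ≈_{Ψi}`. -/

namespace GPF
variable {F A : Type}

def desires : GPF F A → List (BDF F A)
  | .atomic φs => φs
  | .band Ψ1 Ψ2 => Ψ1.desires ++ Ψ2.desires
  | .bor Ψ1 Ψ2 => Ψ1.desires ++ Ψ2.desires
  | .bneg Ψ => Ψ.desires
  | .chain Ψ1 Ψ2 => Ψ1.desires ++ Ψ2.desires

end GPF

section TrajEquiv
variable {F A : Type} {Ψ : GPF F A} {α β γ : PTraj F A}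

theorem trajEquiv_iff_forall_desires :
    TrajEquiv Ψ α β ↔ ∀ φ ∈ Ψ.desires, bdEquiv φ α β := by
  induction Ψ <;> simp_all [TrajEquiv, GPF.desires, or_imp, forall_and]

theorem TrajEquiv.refl (Ψ : GPF F A) (α : PTraj F A) : TrajEquiv Ψ α α :=
  trajEquiv_iff_forall_desires.2 fun _ _ => Iff.rfl

theorem TrajEquiv.symm (h : TrajEquiv Ψ α β) : TrajEquiv Ψ β α :=
  trajEquiv_iff_forall_desires.2 fun φ hφ => (trajEquiv_iff_forall_desires.1 h φ hφ).symm

theorem TrajEquiv.trans (h : TrajEquiv Ψ α β) (h' : TrajEquiv Ψ β γ) : TrajEquiv Ψ α γ :=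
  trajEquiv_iff_forall_desires.2 fun φ hφ =>
    (trajEquiv_iff_forall_desires.1 h φ hφ).trans (trajEquiv_iff_forall_desires.1 h' φ hφ)

end TrajEquiv

section Pref
variable {F A : Type} {Ψ Ψ1 Ψ2 : GPF F A} {α β γ : PTraj F A}

theorem atomicPref.of_bdEquiv {φs : List (BDF F A)} {α' β' : PTraj F A}
    (hα : ∀ φ ∈ φs, bdEquiv φ α α') (hβ : ∀ φ ∈ φs, bdEquiv φ β β')
    (h : atomicPref φs α β) : atomicPref φs α' β' := by
  obtain ⟨i, hi, hlt, hp⟩ := h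
  refine ⟨i, hi, fun j hj hji => ?_, ?_⟩
  · exact (hα _ (φs.get_mem _)).symm.trans ((hlt j hj hji).trans (hβ _ (φs.get_mem _)))
  · exact ⟨(hα _ (φs.get_mem _)).1 hp.1, fun h => hp.2 ((hβ _ (φs.get_mem _)).2 h)⟩

theorem Pref.of_trajEquiv {α' β' : PTraj F A} (hα : TrajEquiv Ψ α α')
    (hβ : TrajEquiv Ψ β β') (h : Pref Ψ α β) : Pref Ψ α' β' := by
  induction Ψ generalizing α β α' β' with
  | atomic φs => exact atomicPref.of_bdEquiv hα hβ h
  | band Ψ1 Ψ2 ih1 ih2 => exact ⟨ih1 hα.1 hβ.1 h.1, ih2 hα.2 hβ.2 h.2⟩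
  | bor Ψ1 Ψ2 ih1 ih2 =>
    have transport {Ψ : GPF F A} (hα : TrajEquiv Ψ α α') (hβ : TrajEquiv Ψ β β')
        (h : TrajEquiv Ψ α β) : TrajEquiv Ψ α' β' := hα.symm.trans (h.trans hβ)
    rcases h with ⟨h1, h2⟩ | ⟨h2, h1⟩ | ⟨h1, h2⟩
    · exact .inl ⟨ih1 hα.1 hβ.1 h1, transport hα.2 hβ.2 h2⟩
    · exact .inr (.inl ⟨ih2 hα.2 hβ.2 h2, transport hα.1 hβ.1 h1⟩)
    · exact .inr (.inr ⟨ih1 hα.1 hβ.1 h1, ih2 hα.2 hβ.2 h2⟩)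
  | bneg Ψ ih => exact ih hβ hα h
  | chain Ψ1 Ψ2 ih1 ih2 =>
    rcases h with h1 | ⟨e1, h2⟩
    · exact .inl (ih1 hα.1 hβ.1 h1)
    · exact .inr ⟨hα.1.symm.trans (e1.trans hβ.1), ih2 hα.2 hβ.2 h2⟩

theorem Pref.trans_trajEquiv (h : Pref Ψ α β) (e : TrajEquiv Ψ β γ) : Pref Ψ α γ :=
  h.of_trajEquiv (.refl Ψ α) e

theorem TrajEquiv.trans_pref (e : TrajEquiv Ψ α β) (h : Pref Ψ β γ) : Pref Ψ α γ :=
  h.of_trajEquiv e.symm (.refl Ψ γ)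

theorem atomicPref_trans {φs : List (BDF F A)} (h : atomicPref φs α β)
    (h' : atomicPref φs β γ) : atomicPref φs α γ := by
  obtain ⟨i, hi, hlt, hp⟩ := h
  obtain ⟨i', hi', hlt', hp'⟩ := h'
  rcases Nat.lt_trichotomy i i' with hii' | rfl | hi'i
  · exact ⟨i, hi, fun j hj hji => (hlt j hj hji).trans (hlt' j hj (hji.trans hii')),
      hp.1, fun hc => hp.2 ((hlt' i hi hii').2 hc)⟩
  · exact absurd hp'.1 hp.2
  · exact ⟨i', hi', fun j hj hji => (hlt j hj (hji.trans hi'i)).trans (hlt' j hj hji),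
      (hlt i' hi' hi'i).2 hp'.1, hp'.2⟩

theorem Pref.irrefl (Ψ : GPF F A) (α : PTraj F A) : ¬ Pref Ψ α α := by
  induction Ψ with
  | atomic φs => exact fun ⟨_, _, _, hp⟩ => hp.2 hp.1
  | band Ψ1 Ψ2 ih1 _ => exact fun h => ih1 h.1
  | bor Ψ1 Ψ2 ih1 ih2 => rintro (⟨h, -⟩ | ⟨h, -⟩ | ⟨h, -⟩) <;> first | exact ih1 h | exact ih2 h
  | bneg Ψ ih => exact ih
  | chain Ψ1 Ψ2 ih1 ih2 => rintro (h | ⟨-, h⟩) <;> first | exact ih1 h | exact ih2 h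

def WeakPref (Ψ : GPF F A) (α β : PTraj F A) : Prop :=
  Pref Ψ α β ∨ TrajEquiv Ψ α β

theorem pref_bor_iff : Pref (.bor Ψ1 Ψ2) α β ↔
    (WeakPref Ψ1 α β ∧ WeakPref Ψ2 α β) ∧ (Pref Ψ1 α β ∨ Pref Ψ2 α β) := by
  simp only [Pref, WeakPref]
  tauto

theorem Pref.trans_weakPref (ht : ∀ ⦃α β γ⦄, Pref Ψ α β → Pref Ψ β γ → Pref Ψ α γ)
    (h : Pref Ψ α β) (h' : WeakPref Ψ β γ) : Pref Ψ α γ :=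
  h'.elim (ht h) h.trans_trajEquiv

theorem WeakPref.trans (ht : ∀ ⦃α β γ⦄, Pref Ψ α β → Pref Ψ β γ → Pref Ψ α γ)
    (h : WeakPref Ψ α β) (h' : WeakPref Ψ β γ) : WeakPref Ψ α γ :=
  h.elim (fun h => .inl (h.trans_weakPref ht h')) fun e =>
    h'.elim (fun h' => .inl (e.trans_pref h')) fun e' => .inr (e.trans e')

theorem Pref.trans (Ψ : GPF F A) :
    ∀ ⦃α β γ⦄, Pref Ψ α β → Pref Ψ β γ → Pref Ψ α γ := by
  induction Ψ with
  | atomic φs => exact fun _ _ _ => atomicPref_trans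
  | band Ψ1 Ψ2 ih1 ih2 => exact fun _ _ _ h h' => ⟨ih1 h.1 h'.1, ih2 h.2 h'.2⟩
  | bor Ψ1 Ψ2 ih1 ih2 =>
    intro α β γ h h'
    obtain ⟨⟨w1, w2⟩, hs⟩ := pref_bor_iff.1 h
    obtain ⟨⟨w1', w2'⟩, -⟩ := pref_bor_iff.1 h'
    refine pref_bor_iff.2 ⟨⟨w1.trans ih1 w1', w2.trans ih2 w2'⟩, ?_⟩
    rcases hs with hs | hs
    · exact .inl (hs.trans_weakPref ih1 w1')
    · exact .inr (hs.trans_weakPref ih2 w2')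
  | bneg Ψ ih => exact fun _ _ _ h h' => ih h' h
  | chain Ψ1 Ψ2 ih1 ih2 =>
    rintro α β γ (h1 | ⟨e1, h2⟩) (h1' | ⟨e1', h2'⟩)
    · exact .inl (ih1 h1 h1')
    · exact .inl (h1.trans_trajEquiv e1')
    · exact .inl (e1.trans_pref h1')
    · exact .inr ⟨e1.trans e1', ih2 h2 h2'⟩

end Pref

/-- **`≺_Ψ` is a strict partial order on trajectories**: irreflexive and transitive. -/
theorem pref_strict_partial_order {F A : Type} (D : BDomain F A) (Ψ : GPF F A) :
    (∀ α : PTraj F A, α.ValidFor D → ¬ Pref Ψ α α) ∧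
    (∀ α β γ : PTraj F A, α.ValidFor D → β.ValidFor D → γ.ValidFor D →
        Pref Ψ α β → Pref Ψ β γ → Pref Ψ α γ) :=
  ⟨fun α _ => Pref.irrefl Ψ α, fun _ _ _ _ _ _ h h' => Pref.trans Ψ h h'⟩
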